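/- Let X, V, W be objects of A, let g : V ⟶ W be a morphism viewed as an object of Arrow(A), and let z_X : 0 ⟶ X be the unique morphism from a zero object of A to X, viewed as an object of Arrow(A). Then for every n ∈ ℕ there is an isomorphism of abelian groups Ext^n_{Arrow(A)}(z_X, g) ≅ Ext^n_A(X, W). -/

import Mathlib

open CategoryTheory Limits

universe w v u

variable (A : Type u) [Category.{v} A] [Abelian A]

/-- The functor `F : A × A ⥤ Arrow A` sending `(X, Y)` to the object
`biprod.inl : X ⟶ X ⊞ Y` of the arrow category. -/
@[simps]
noncomputable def ArrF : A × A ⥤ Arrow A where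
  obj p := Arrow.mk (biprod.inl : p.1 ⟶ p.1 ⊞ p.2)
  map {p q} φ := Arrow.homMk (u := φ.1) (v := biprod.map φ.1 φ.2) (by simp)

/-- The forgetful functor `G : Arrow A ⥤ A × A` sending an object `f : X ⟶ Y` of the
arrow category to the pair `(X, Y)`. -/
@[simps]
def ArrG : Arrow A ⥤ A × A where
  obj f := (f.left, f.right)
  map φ := (φ.left, φ.right)

variable {A}

/-- The counit morphism `ε_f : FG(f) ⟶ f`, whose domain component is `𝟙 X` and whose
codomain component is `biprod.desc f 𝟙 : X ⊞ Y ⟶ Y`. -/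
noncomputable def arrCounit (f : Arrow A) : (ArrF A).obj ((ArrG A).obj f) ⟶ f :=
  Arrow.homMk (u := 𝟙 f.left) (v := biprod.desc f.hom (𝟙 f.right))
    (by first | (dsimp [ArrF, ArrG]; simp) | simp [ArrF, ArrG] | (change 𝟙 f.left ≫ f.hom = biprod.inl ≫ biprod.desc f.hom (𝟙 f.right); simp))

/-! The functor `X ↦ (0 ⟶ X)` from `A` to `Arrow A` is left adjoint to the target functor
`f ↦ f.right` and right adjoint to the cokernel functor, hence exact; the target functor is
exact because colimits in `Arrow A` are computed pointwise. An adjunction between exact functors passes to cochain complexes and,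
by localization, to derived categories; as exact functors commute with the single-complex
embeddings and with shifts, it identifies `Hom(z_X, g⟦n⟧) = Ext^n(z_X, g)` with
`Hom(X, W⟦n⟧) = Ext^n(X, W)`. -/

universe v₁ v₂ u₁ u₂

namespace CategoryTheory

variable {C : Type u₁} {D : Type u₂} [Category.{v₁} C] [Category.{v₂} D]
  {F : C ⥤ D} {G : D ⥤ C}

section HomologicalComplex

variable [HasZeroMorphisms C] [HasZeroMorphisms D] [F.PreservesZeroMorphisms]
  [G.PreservesZeroMorphisms] {ι : Type*}

def Adjunction.mapHomologicalComplex (adj : F ⊣ G) (c : ComplexShape ι) :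
    F.mapHomologicalComplex c ⊣ G.mapHomologicalComplex c where
  unit :=
    { app K :=
        { f i := adj.unit.app (K.X i)
          comm' i j _ := (adj.unit.naturality (K.d i j)).symm }
      naturality K L φ := by ext i; exact adj.unit.naturality (φ.f i) }
  counit :=
    { app L :=
        { f i := adj.counit.app (L.X i)
          comm' i j _ := (adj.counit.naturality (L.d i j)).symm }
      naturality K L φ := by ext i; exact adj.counit.naturality (φ.f i) }
  left_triangle_components K := by ext i; exact adj.left_triangle_components (K.X i)
  right_triangle_components L := by ext i; exact adj.right_triangle_components (L.X i)

end HomologicalComplex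

section DerivedCategory

variable [Abelian C] [Abelian D] [HasDerivedCategory C] [HasDerivedCategory D]
  [F.Additive] [PreservesFiniteLimits F] [PreservesFiniteColimits F]
  [G.Additive] [PreservesFiniteLimits G] [PreservesFiniteColimits G]

noncomputable def Adjunction.mapDerivedCategory (adj : F ⊣ G) :
    F.mapDerivedCategory ⊣ G.mapDerivedCategory :=
  letI : CatCommSq (F.mapHomologicalComplex (.up ℤ)) DerivedCategory.Q DerivedCategory.Q
      F.mapDerivedCategory := ⟨F.mapDerivedCategoryFactors.symm⟩
  letI : CatCommSq (G.mapHomologicalComplex (.up ℤ)) DerivedCategory.Q DerivedCategory.Q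
      G.mapDerivedCategory := ⟨G.mapDerivedCategoryFactors.symm⟩
  (adj.mapHomologicalComplex _).localization DerivedCategory.Q
    (HomologicalComplex.quasiIso C _) DerivedCategory.Q (HomologicalComplex.quasiIso D _) _ _

noncomputable def Adjunction.singleShiftedHomAddEquiv (adj : F ⊣ G) (X : C) (Y : D) (n : ℤ) :
    ((DerivedCategory.singleFunctor D 0).obj (F.obj X) ⟶
        ((DerivedCategory.singleFunctor D 0).obj Y)⟦n⟧) ≃+
      ((DerivedCategory.singleFunctor C 0).obj X ⟶
        ((DerivedCategory.singleFunctor C 0).obj (G.obj Y))⟦n⟧) :=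
  (Linear.homCongr ℤ ((F.mapDerivedCategorySingleFunctor 0).app X).symm (Iso.refl _)).toAddEquiv
    |>.trans (adj.mapDerivedCategory.homAddEquiv _ _)
    |>.trans (Linear.homCongr ℤ (Iso.refl _) <|
      (G.mapDerivedCategory.commShiftIso n).app _ ≪≫
        (shiftFunctor _ n).mapIso ((G.mapDerivedCategorySingleFunctor 0).app Y)).toAddEquiv

end DerivedCategory

open Abelian in
noncomputable def Adjunction.extAddEquiv [Abelian C] [Abelian D] [HasExt.{w} C] [HasExt.{w} D]
    (adj : F ⊣ G) [PreservesFiniteLimits F] [PreservesFiniteColimits G]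
    (X : C) (Y : D) (n : ℕ) :
    Ext.{w} (F.obj X) Y n ≃+ Ext.{w} X (G.obj Y) n :=
  letI := HasDerivedCategory.standard C
  letI := HasDerivedCategory.standard D
  haveI : PreservesColimitsOfSize.{0, 0} F := adj.leftAdjoint_preservesColimits
  haveI : PreservesLimitsOfSize.{0, 0} G := adj.rightAdjoint_preservesLimits
  haveI : F.Additive := F.additive_of_preserves_binary_products
  haveI : G.Additive := adj.right_adjoint_additive
  Ext.homAddEquiv.trans <| (adj.singleShiftedHomAddEquiv X Y n).trans Ext.homAddEquiv.symm

namespace Arrow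

open ZeroObject

variable (C : Type u₁) [Category.{v₁} C] [HasZeroMorphisms C] [HasZeroObject C]

noncomputable def fromZero : C ⥤ Arrow C where
  obj Y := Arrow.mk (0 : (0 : C) ⟶ Y)
  map f := Arrow.homMk' (𝟙 0) f

noncomputable def fromZeroAdjunction : fromZero C ⊣ rightFunc :=
  Adjunction.mkOfHomEquiv
    { homEquiv Y f :=
        { toFun φ := φ.right
          invFun v := Arrow.homMk' (f := 0) (g := f.hom) 0 v
          left_inv φ := by
            ext
            · exact (isZero_zero C).eq_of_src _ _
            · rfl
          right_inv v := rfl }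
      homEquiv_naturality_left_symm φ ψ := by
        ext
        · exact (isZero_zero C).eq_of_src _ _
        · rfl
      homEquiv_naturality_right φ ψ := rfl }

noncomputable def cokernelHomEquiv [HasCokernels C] (f : Arrow C) (Y : C) :
    (cokernel f.hom ⟶ Y) ≃ (f ⟶ (fromZero C).obj Y) where
  toFun c := Arrow.homMk' (f := f.hom) (g := 0) 0 (cokernel.π _ ≫ c)
    (by rw [zero_comp, cokernel.condition_assoc f.hom c]; exact zero_comp.symm)
  invFun φ := cokernel.desc _ φ.right (φ.w.symm.trans comp_zero)
  left_inv c := coequalizer.hom_ext (cokernel.π_desc _ _ _)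
  right_inv φ := by
    ext
    · exact (isZero_zero C).eq_of_tgt _ _
    · exact cokernel.π_desc _ _ _

instance [HasCokernels C] : (fromZero C).IsRightAdjoint :=
  ⟨_, ⟨Adjunction.adjunctionOfEquivLeft (F_obj := fun f : Arrow C => cokernel f.hom)
    (cokernelHomEquiv C) fun _ _ _ _ _ => by
      ext
      · exact (isZero_zero C).eq_of_tgt _ _
      · exact (Category.assoc (obj := C) _ _ _).symm⟩⟩

instance [HasFiniteColimits C] : PreservesFiniteColimits (rightFunc : Arrow C ⥤ C) :=
  ⟨fun _ _ _ => inferInstance⟩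

end Arrow

end CategoryTheory

open ZeroObject in
theorem statement16_general [HasExt.{w} A]
    [Abelian (Arrow A)] [HasExt.{w} (Arrow A)]
    (X V W : A) (g : V ⟶ W) (n : ℕ) :
    Nonempty (Abelian.Ext (Arrow.mk (0 : (0 : A) ⟶ X)) (Arrow.mk g) n ≃+
      Abelian.Ext X W n) :=
  ⟨(Arrow.fromZeroAdjunction A).extAddEquiv X (Arrow.mk g) n⟩

open ZeroObject in
/-- for objects `X, V, W` of `A`, a morphism `g : V ⟶ W` viewed as an
object of `Arrow A`, and `z_X : 0 ⟶ X` the unique morphism from a zero object of `A`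
to `X` viewed as an object of `Arrow A`, there is, for each `n : ℕ`, an isomorphism of
abelian groups `Ext^n_{Arrow A}(z_X, g) ≅ Ext^n_A(X, W)`. -/
theorem statement16 [EnoughProjectives A] [HasExt.{w} A]
    [Abelian (Arrow A)] [HasExt.{w} (Arrow A)]
    (X V W : A) (g : V ⟶ W) (n : ℕ) :
    Nonempty (Abelian.Ext (Arrow.mk (0 : (0 : A) ⟶ X)) (Arrow.mk g) n ≃+
      Abelian.Ext X W n) :=
  statement16_general X V W g n
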